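/- Let ε ∈ (0, 1/2] and let q ∈ ℝ satisfy (gaussianReal 0 1)(Iic q) = 1 − ε, where Iic(t) = {x : x ≤ t}. Then q ≤ ((1−ε)/(e·ε))^{1/1.95}, where e = exp(1). That is, the (1−ε)-quantile of the standard Gaussian distribution is at most the paper's unimodal safety factor at level ε. -/

import Mathlib

/-!
Let `R` be the safety factor and `φ` the standard normal density. The standard Gaussian charges
every nonempty open interval, so it suffices to show `P(X ≤ R) ≥ 1 - ε`.

For `ε ≤ 0.31` this follows from Mills' ratio bound `P(X > R) ≤ φ(R) / R`: using
`R ^ 1.95 = (1 - ε) / (e ε)` and `log R ≤ (R² - 1) / 2`, the inequality `φ(R) / R ≤ ε`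
reduces to the numerical fact `exp (21/40) ≤ (1 - ε) √(2π)`.

For `0.31 ≤ ε ≤ 1/2` we have `R ∈ [0.59, 1]`, and since `φ` decreases on `[0, R]`,
`P(X ≤ R) ≥ 1/2 + R φ(R) ≥ 0.69 ≥ 1 - ε`.
-/

open MeasureTheory ProbabilityTheory Real Set Filter Topology

lemma exp_21_div_40_le : exp (21 / 40) ≤ 17 / 10 := by
  refine (exp_bound' (n := 5) (by norm_num) (by norm_num) (by norm_num)).trans ?_
  norm_num [Finset.sum_range_succ, Nat.factorial]

lemma exp_20_div_39_le : exp (20 / 39) ≤ 100 / 59 := by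
  refine (exp_bound' (n := 5) (by norm_num) (by norm_num) (by norm_num)).trans ?_
  norm_num [Finset.sum_range_succ, Nat.factorial]

lemma five_div_two_le_sqrt_two_mul_pi : 5 / 2 ≤ √(2 * π) :=
  le_sqrt_of_sq_le (by nlinarith [pi_gt_d2])

lemma sqrt_two_mul_pi_le : √(2 * π) ≤ 251 / 100 :=
  sqrt_le_iff.2 ⟨by norm_num, by nlinarith [pi_lt_d2]⟩

lemma MeasureTheory.le_of_measure_Iic_le_measure_Iic {μ : Measure ℝ} [IsFiniteMeasure μ]
    (hμ : volume ≪ μ) {q r : ℝ} (h : μ (Iic q) ≤ μ (Iic r)) : q ≤ r := by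
  by_contra! hrq
  have hpos : μ (Ioc r q) ≠ 0 := fun h0 ↦ hrq.not_ge (by simpa using hμ h0)
  have hsplit : μ (Iic q) = μ (Iic r) + μ (Ioc r q) := by
    rw [← Iic_union_Ioc_eq_Iic hrq.le, measure_union (Iic_disjoint_Ioc le_rfl) measurableSet_Ioc]
  exact (ENNReal.lt_add_right (measure_ne_top _ _) hpos).not_ge (hsplit ▸ h)

namespace ProbabilityTheory

lemma gaussianReal_real_apply (μ : ℝ) {v : NNReal} (hv : v ≠ 0) (s : Set ℝ) :
    (gaussianReal μ v).real s = ∫ x in s, gaussianPDFReal μ v x := by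
  rw [measureReal_def, gaussianReal_apply_eq_integral μ hv,
    ENNReal.toReal_ofReal (integral_nonneg fun x ↦ gaussianPDFReal_nonneg μ v x)]

lemma gaussianReal_real_Iic_zero {v : NNReal} (hv : v ≠ 0) :
    (gaussianReal 0 v).real (Iic 0) = 1 / 2 := by
  have : NullSingletonClass (gaussianReal 0 v) := nullSingletonClass_gaussianReal hv
  have hsymm : (gaussianReal 0 v).real (Ici 0) = (gaussianReal 0 v).real (Iic 0) := by
    conv_rhs =>
      rw [← neg_zero, ← gaussianReal_map_neg,
        map_measureReal_apply measurable_neg measurableSet_Iic]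
    simp
  have hcompl :=
    probReal_compl_eq_one_sub (μ := gaussianReal 0 v) (measurableSet_Iic (a := (0 : ℝ)))
  rw [compl_Iic, measureReal_congr Ioi_ae_eq_Ici, hsymm] at hcompl
  linarith

lemma gaussianPDFReal_zero_one (x : ℝ) :
    gaussianPDFReal 0 1 x = (√(2 * π))⁻¹ * exp (-x ^ 2 / 2) := by
  simp [gaussianPDFReal]

lemma hasDerivAt_gaussianPDFReal_zero_one (x : ℝ) :
    HasDerivAt (gaussianPDFReal 0 1) (-x * gaussianPDFReal 0 1 x) x := by
  have hexponent : HasDerivAt (fun y : ℝ ↦ -y ^ 2 / 2) (-x) x :=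
    ((hasDerivAt_pow 2 x).neg.div_const 2).congr_deriv (by norm_num; ring)
  rw [funext gaussianPDFReal_zero_one]
  exact (hexponent.exp.const_mul _).congr_deriv (by ring)

lemma antitoneOn_gaussianPDFReal_zero_one : AntitoneOn (gaussianPDFReal 0 1) (Ici 0) := by
  intro x hx y _ hxy
  simp only [gaussianPDFReal_zero_one]
  gcongr

lemma tendsto_gaussianPDFReal_zero_one_atTop : Tendsto (gaussianPDFReal 0 1) atTop (𝓝 0) := by
  simp_rw [funext gaussianPDFReal_zero_one]
  rw [← mul_zero (√(2 * π))⁻¹]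
  refine (tendsto_exp_atBot.comp ?_).const_mul _
  exact (tendsto_neg_atTop_atBot.comp (tendsto_pow_atTop two_ne_zero)).atBot_div_const two_pos

lemma gaussianReal_real_Ioi_le {r : ℝ} (hr : 0 < r) :
    (gaussianReal 0 1).real (Ioi r) ≤ gaussianPDFReal 0 1 r / r := by
  have hderiv : ∀ x ∈ Ici r, HasDerivAt (fun y ↦ -gaussianPDFReal 0 1 y)
      (x * gaussianPDFReal 0 1 x) x := fun x _ ↦
    (hasDerivAt_gaussianPDFReal_zero_one x).neg.congr_deriv (by ring)
  have hnonneg : ∀ x ∈ Ioi r, 0 ≤ x * gaussianPDFReal 0 1 x := fun x hx ↦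
    mul_nonneg (hr.trans hx).le (gaussianPDFReal_nonneg 0 1 x)
  have hlim : Tendsto (fun y ↦ -gaussianPDFReal 0 1 y) atTop (𝓝 0) := by
    simpa using tendsto_gaussianPDFReal_zero_one_atTop.neg
  calc (gaussianReal 0 1).real (Ioi r) = ∫ x in Ioi r, gaussianPDFReal 0 1 x :=
        gaussianReal_real_apply 0 one_ne_zero _
    _ ≤ ∫ x in Ioi r, r⁻¹ * (x * gaussianPDFReal 0 1 x) := by
        refine setIntegral_mono_on (integrable_gaussianPDFReal 0 1).integrableOn
          ((integrableOn_Ioi_deriv_of_nonneg' hderiv hnonneg hlim).const_mul _) measurableSet_Ioi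
          fun x hx ↦ ?_
        rw [← mul_assoc, le_mul_iff_one_le_left (gaussianPDFReal_pos 0 1 x one_ne_zero),
          inv_mul_eq_div, one_le_div hr]
        exact hx.le
    _ = gaussianPDFReal 0 1 r / r := by
        rw [integral_const_mul, integral_Ioi_of_hasDerivAt_of_nonneg' hderiv hnonneg hlim]
        ring

lemma half_add_mul_gaussianPDFReal_le {r : ℝ} (hr : 0 ≤ r) :
    1 / 2 + r * gaussianPDFReal 0 1 r ≤ (gaussianReal 0 1).real (Iic r) := by
  have hmid : r * gaussianPDFReal 0 1 r ≤ (gaussianReal 0 1).real (Ioc 0 r) := by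
    rw [gaussianReal_real_apply 0 one_ne_zero]
    have := setIntegral_mono_on (integrableOn_const measure_Ioc_lt_top.ne)
      (integrable_gaussianPDFReal 0 1).integrableOn measurableSet_Ioc fun x hx ↦
        antitoneOn_gaussianPDFReal_zero_one (mem_Ici.2 hx.1.le) (mem_Ici.2 hr) hx.2
    simpa [Real.volume_real_Ioc_of_le hr] using this
  rw [← Iic_union_Ioc_eq_Iic hr, measureReal_union (Iic_disjoint_Ioc le_rfl) measurableSet_Ioc,
    gaussianReal_real_Iic_zero one_ne_zero]
  linarith

lemma mul_gaussianPDFReal_zero_one_ge {r : ℝ} (hr : r ∈ Icc (59 / 100 : ℝ) 1) :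
    19 / 100 ≤ r * gaussianPDFReal 0 1 r := by
  obtain ⟨h1, h2⟩ := hr
  have hexp : 1 - r ^ 2 / 2 ≤ exp (-r ^ 2 / 2) := by linarith [add_one_le_exp (-r ^ 2 / 2)]
  have hcubic : 19 / 100 * (251 / 100) ≤ r * (1 - r ^ 2 / 2) := by
    nlinarith [mul_nonneg (mul_nonneg (sub_nonneg.2 h1) (sub_nonneg.2 h2)) (by linarith : 0 ≤ r)]
  rw [gaussianPDFReal_zero_one, mul_left_comm, le_inv_mul_iff₀ (by positivity)]
  nlinarith [sqrt_two_mul_pi_le]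

end ProbabilityTheory

noncomputable def unimodalSafetyFactor (ε : ℝ) : ℝ :=
  ((1 - ε) / (exp 1 * ε)) ^ ((1 : ℝ) / 1.95)

section unimodalSafetyFactor

variable {ε : ℝ}

lemma log_unimodalSafetyFactor (h0 : 0 < ε) (h1 : ε < 1) :
    log (unimodalSafetyFactor ε) = 20 / 39 * (log (1 - ε) - 1 - log ε) := by
  rw [unimodalSafetyFactor, log_rpow (div_pos (by linarith) (by positivity)),
    log_div (by linarith) (by positivity), log_mul (exp_pos 1).ne' h0.ne', log_exp]
  norm_num [sub_sub]

lemma unimodalSafetyFactor_pos (h0 : 0 < ε) (h1 : ε < 1) : 0 < unimodalSafetyFactor ε :=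
  rpow_pos_of_pos (div_pos (by linarith) (by positivity)) _

lemma gaussianPDFReal_div_unimodalSafetyFactor_le (h0 : 0 < ε) (h : ε ≤ 31 / 100) :
    gaussianPDFReal 0 1 (unimodalSafetyFactor ε) / unimodalSafetyFactor ε ≤ ε := by
  set R := unimodalSafetyFactor ε
  have hR : 0 < R := unimodalSafetyFactor_pos h0 (by linarith)
  have hlogR := log_unimodalSafetyFactor h0 (by linarith)
  have hlog_sq : 2 * log R ≤ R ^ 2 - 1 := by
    simpa [log_pow] using log_le_sub_one_of_pos (pow_pos hR 2)
  have hconst : 21 / 40 ≤ log (1 - ε) + log √(2 * π) := by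
    rw [← log_mul (by linarith) (by positivity),
      le_log_iff_exp_le (mul_pos (by linarith) (by positivity))]
    nlinarith [exp_21_div_40_le, five_div_two_le_sqrt_two_mul_pi]
  have hexp : exp (-R ^ 2 / 2) ≤ √(2 * π) * (ε * R) := by
    rw [← exp_log (by positivity : 0 < √(2 * π) * (ε * R)), exp_le_exp,
      log_mul (by positivity) (by positivity), log_mul h0.ne' hR.ne']
    linarith [sq_nonneg R]
  rwa [gaussianPDFReal_zero_one, div_le_iff₀ hR, inv_mul_le_iff₀ (by positivity)]

lemma unimodalSafetyFactor_mem_Icc (h1 : 31 / 100 ≤ ε) (h2 : ε ≤ 1 / 2) :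
    unimodalSafetyFactor ε ∈ Icc (59 / 100) 1 := by
  have h0 : 0 < ε := by linarith
  have hlogR := log_unimodalSafetyFactor h0 (by linarith)
  have hR := unimodalSafetyFactor_pos h0 (by linarith)
  constructor
  · calc 59 / 100 ≤ exp (-(20 / 39)) := by
          rw [exp_neg, ← inv_div]
          exact inv_anti₀ (exp_pos _) exp_20_div_39_le
      _ ≤ exp (log (unimodalSafetyFactor ε)) := by
          rw [exp_le_exp, hlogR]
          linarith [log_le_log h0 (show ε ≤ 1 - ε by linarith)]
      _ = unimodalSafetyFactor ε := exp_log hR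
  · refine rpow_le_one (div_nonneg (by linarith) (by positivity)) ?_ (by norm_num)
    rw [div_le_one (by positivity)]
    nlinarith [exp_one_gt_d9]

lemma one_sub_le_gaussianReal_real_Iic_unimodalSafetyFactor (h0 : 0 < ε) (h : ε ≤ 1 / 2) :
    1 - ε ≤ (gaussianReal 0 1).real (Iic (unimodalSafetyFactor ε)) := by
  rcases le_or_gt ε (31 / 100) with hsmall | hlarge
  · have hR := unimodalSafetyFactor_pos h0 (by linarith)
    rw [← compl_Ioi, probReal_compl_eq_one_sub measurableSet_Ioi]
    linarith [gaussianReal_real_Ioi_le hR, gaussianPDFReal_div_unimodalSafetyFactor_le h0 hsmall]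
  · have hR := unimodalSafetyFactor_mem_Icc hlarge.le h
    linarith [half_add_mul_gaussianPDFReal_le (by linarith [hR.1] : 0 ≤ unimodalSafetyFactor ε),
      mul_gaussianPDFReal_zero_one_ge hR]

end unimodalSafetyFactor

/-- The `(1-ε)`-quantile of the standard Gaussian is at most the unimodal
safety factor `((1-ε)/(e·ε))^(1/1.95)` for every `ε ∈ (0, 1/2]`. -/
theorem gaussian_quantile_le_unimodal_safety_factor (ε : ℝ)
    (hε : ε ∈ Set.Ioc (0 : ℝ) (1 / 2)) (q : ℝ)
    (hq : gaussianReal 0 1 (Set.Iic q) = ENNReal.ofReal (1 - ε)) :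
    q ≤ ((1 - ε) / (Real.exp 1 * ε)) ^ ((1 : ℝ) / 1.95) := by
  refine le_of_measure_Iic_le_measure_Iic (gaussianReal_absolutelyContinuous' 0 one_ne_zero) ?_
  rw [hq, ← ofReal_measureReal]
  exact ENNReal.ofReal_le_ofReal <|
    one_sub_le_gaussianReal_real_Iic_unimodalSafetyFactor hε.1 hε.2
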